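/- arXiv:1209.2131 — 2 statements merged into one kernel-verified Lean document; each statement's English description precedes it below -/
import Mathlib

section
/- In the star network setting, if θ > 0 and (p̃, λ) satisfies the KKT conditions at θ, then η_j + θ > λ_j for every j ∈ {1,…,J}. -/
/-- The star network setting of Abhishek–Hajek. -/
structure StarSetting where
  /-- number of arms -/
  J : ℕ
  hJ : 0 < J
  /-- number of leaf items on arm `j` -/
  n : Fin J → ℕ
  hn : ∀ j, 0 < n j
  /-- winning single-item bids -/
  b : (j : Fin J) → Fin (n j) → ℝ
  /-- losing single-item bids -/
  bl : (j : Fin J) → Fin (n j) → ℝ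
  /-- losing single-item bid for item zero -/
  bl0 : ℝ
  /-- package bids -/
  C : Fin J → ℝ
  h_bid : ∀ j k, bl j k ≤ b j k
  h_pos : ∀ j, ∃ k, bl j k < b j k

namespace StarSetting

/-- Index of items (= winning buyers): `none` is item zero, `some ⟨j,k⟩` is item `(j,k)`. -/
abbrev Idx (S : StarSetting) := Option ((j : Fin S.J) × Fin (S.n j))

variable (S : StarSetting)

noncomputable def Δ (j : Fin S.J) (k : Fin (S.n j)) : ℝ := S.b j k - S.bl j k

noncomputable def Δmax (j : Fin S.J) : ℝ :=
  Finset.univ.sup' ⟨⟨0, S.hn j⟩, Finset.mem_univ _⟩ (S.Δ j)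

noncomputable def v0 : ℝ :=
  max S.bl0 (Finset.univ.sup' ⟨⟨0, S.hJ⟩, Finset.mem_univ _⟩
    fun j => S.C j - ∑ k, S.b j k)

noncomputable def η (j : Fin S.J) : ℝ := S.v0 + (∑ k, S.b j k) - S.C j

/-- The Vikrey price vector `v_θ`. -/
noncomputable def vick (θ : ℝ) : EuclideanSpace ℝ S.Idx :=
  WithLp.toLp 2 fun (i : S.Idx) => Option.elim i S.v0 fun jk => max (S.b jk.1 jk.2 - S.η jk.1 - θ) (S.bl jk.1 jk.2)

/-- The core region `K_θ`. -/
def coreK (θ : ℝ) : Set (EuclideanSpace ℝ S.Idx) :=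
  { p | (∀ j, S.C j ≤ p none + ∑ k, p (some ⟨j, k⟩)) ∧
        (∀ j k, S.bl j k ≤ p (some ⟨j, k⟩) ∧ p (some ⟨j, k⟩) ≤ S.b j k) ∧
        S.v0 ≤ p none ∧ p none ≤ S.v0 + θ }

/-- The expanded core region (IR constraint of buyer zero dropped). -/
def expandedK : Set (EuclideanSpace ℝ S.Idx) :=
  { p | (∀ j, S.C j ≤ p none + ∑ k, p (some ⟨j, k⟩)) ∧
        (∀ j k, S.bl j k ≤ p (some ⟨j, k⟩) ∧ p (some ⟨j, k⟩) ≤ S.b j k) ∧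
        S.v0 ≤ p none }

/-- The KKT conditions at `θ` for the projection onto the expanded core. -/
def KKT (θ : ℝ) (p : EuclideanSpace ℝ S.Idx) (lam : Fin S.J → ℝ) : Prop :=
  (∀ j, 0 ≤ lam j) ∧
  p none = S.v0 + ∑ j, lam j ∧
  (∀ j k, p (some ⟨j, k⟩) = min (S.vick θ (some ⟨j, k⟩) + lam j) (S.b j k)) ∧
  (∀ j, ∑ k, max (min (S.η j + θ) (S.Δ j k) - lam j) 0 ≤ (∑ i, lam i) + S.η j) ∧
  (∀ j, 0 < lam j → (∑ i, lam i) + S.η j = ∑ k, max (min (S.η j + θ) (S.Δ j k) - lam j) 0)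

/-- The seller's revenue for a winner price vector. -/
noncomputable def revenue (p : EuclideanSpace ℝ S.Idx) : ℝ :=
  p none + ∑ j, ∑ k, p (some ⟨j, k⟩)

/-- The minimum revenue core at `θ`. -/
def MRC (θ : ℝ) : Set (EuclideanSpace ℝ S.Idx) :=
  { p | p ∈ S.coreK θ ∧ ∀ q ∈ S.coreK θ, S.revenue p ≤ S.revenue q }

end StarSetting

/-- `q` is a point of `A` nearest to `v` (Euclidean projection of `v` onto `A`). -/
def IsProjOn {E : Type*} [NormedAddCommGroup E] (A : Set E) (v q : E) : Prop :=
  q ∈ A ∧ ∀ r ∈ A, dist v q ≤ dist v r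

/-- `f` is piecewise linear on `[0, ∞)`: there are finitely many breakpoints
`0 = t 0 < t 1 < ⋯ < t m` such that `f` is affine on each `[t i, t (i+1)]` and on `[t m, ∞)`. -/
def PiecewiseLinearOnIci (f : ℝ → ℝ) : Prop :=
  ∃ m : ℕ, ∃ t : Fin (m + 1) → ℝ, t 0 = 0 ∧ StrictMono t ∧
    (∀ i : Fin m, ∃ a c : ℝ, ∀ x ∈ Set.Icc (t i.castSucc) (t i.succ), f x = a * x + c) ∧
    (∃ a c : ℝ, ∀ x ∈ Set.Ici (t (Fin.last m)), f x = a * x + c)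

theorem Finset.sum_max_min_sub_eq_zero {ι : Type*} (s : Finset ι) (d : ι → ℝ) {a c : ℝ}
    (hac : a ≤ c) : ∑ k ∈ s, max (min a (d k) - c) 0 = 0 :=
  Finset.sum_eq_zero fun k _ => max_eq_right (by linarith [min_le_left a (d k)])

namespace StarSetting

theorem η_nonneg (S : StarSetting) (j : Fin S.J) : 0 ≤ S.η j := by
  have hj : S.C j - ∑ k, S.b j k ≤ S.v0 :=
    (Finset.le_sup' (fun j => S.C j - ∑ k, S.b j k) (Finset.mem_univ j)).trans (le_max_right _ _)
  rw [η]
  linarith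

end StarSetting

/-- if `(p̃, λ)` satisfies the KKT conditions at `θ > 0`, then
`η_j + θ > λ_j` for every `j`. -/
theorem kkt_lam_lt_eta_add_theta (S : StarSetting) (θ : ℝ) (hθ : 0 < θ)
    (p : EuclideanSpace ℝ S.Idx) (lam : Fin S.J → ℝ)
    (h : S.KKT θ p lam) :
    ∀ j, lam j < S.η j + θ := by
  obtain ⟨hlam_nonneg, -, -, -, htight⟩ := h
  intro j
  by_contra! hge
  have hlam_pos : 0 < lam j := by linarith [S.η_nonneg j]
  have hzero : (∑ i, lam i) + S.η j = 0 := by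
    rw [htight j hlam_pos, Finset.sum_max_min_sub_eq_zero _ _ hge]
  have hlam_le_sum : lam j ≤ ∑ i, lam i :=
    Finset.single_le_sum (fun i _ => hlam_nonneg i) (Finset.mem_univ j)
  linarith [S.η_nonneg j]
end

section
/- In the star network setting, letting λ_{j,θ} denote the (unique) Lagrange multipliers satisfying the KKT conditions at θ and σ_θ := Σ_{j=1}^J λ_{j,θ}, the function θ ↦ σ_θ is nondecreasing on [0,∞): for all 0 ≤ θ ≤ θ', σ_θ ≤ σ_{θ'}. -/
namespace StarSetting

variable (S : StarSetting)

/-- Right-hand side of the KKT constraint of arm `j`. -/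
noncomputable def armDemand (j : Fin S.J) (θ x : ℝ) : ℝ :=
  ∑ k, max (min (S.η j + θ) (S.Δ j k) - x) 0

variable {S}

theorem armDemand_mono {j : Fin S.J} {θ θ' x x' : ℝ} (hθ : θ ≤ θ') (hx : x' ≤ x) :
    S.armDemand j θ x ≤ S.armDemand j θ' x' := by
  refine Finset.sum_le_sum fun k _ => max_le_max ?_ le_rfl
  have : min (S.η j + θ) (S.Δ j k) ≤ min (S.η j + θ') (S.Δ j k) :=
    min_le_min (by linarith) le_rfl
  linarith

namespace KKT

variable {θ : ℝ} {p : EuclideanSpace ℝ S.Idx} {lam : Fin S.J → ℝ}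

theorem nonneg (h : S.KKT θ p lam) (j : Fin S.J) : 0 ≤ lam j := h.1 j

theorem armDemand_le (h : S.KKT θ p lam) (j : Fin S.J) :
    S.armDemand j θ (lam j) ≤ (∑ i, lam i) + S.η j := h.2.2.2.1 j

theorem armDemand_eq (h : S.KKT θ p lam) {j : Fin S.J} (hj : 0 < lam j) :
    (∑ i, lam i) + S.η j = S.armDemand j θ (lam j) := h.2.2.2.2 j hj

theorem sum_le_sum {θ' : ℝ} {p' : EuclideanSpace ℝ S.Idx} {lam' : Fin S.J → ℝ}
    (h : S.KKT θ p lam) (h' : S.KKT θ' p' lam') (hθ : θ ≤ θ') :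
    ∑ j, lam j ≤ ∑ j, lam' j := by
  by_contra! hlt
  obtain ⟨j, -, hj⟩ := Finset.exists_lt_of_sum_lt hlt
  have tight := h.armDemand_eq (h'.nonneg j |>.trans_lt hj)
  have := (armDemand_mono (j := j) hθ hj.le).trans (h'.armDemand_le j)
  linarith

end KKT

end StarSetting

/-- the sum of the KKT Lagrange multipliers, `σ_θ = Σ_j λ_{j,θ}`, is
nondecreasing on `[0,∞)`. -/
theorem kkt_sigma_monotone (S : StarSetting)
    (lam : ℝ → Fin S.J → ℝ)
    (hlam : ∀ θ : ℝ, 0 ≤ θ → ∃ p : EuclideanSpace ℝ S.Idx, S.KKT θ p (lam θ)) :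
    ∀ θ θ' : ℝ, 0 ≤ θ → θ ≤ θ' → ∑ j, lam θ j ≤ ∑ j, lam θ' j := by
  intro θ θ' hθ hθθ'
  obtain ⟨p, hp⟩ := hlam θ hθ
  obtain ⟨p', hp'⟩ := hlam θ' (hθ.trans hθθ')
  exact hp.sum_le_sum hp' hθθ'
end
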